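/- arXiv:1408.4658 — 2 statements merged into one kernel-verified Lean document; each statement's English description precedes it below -/
import Mathlib

section
/- For every α ∈ (0,1), if K ⊆ ℝ² is a nonempty compact set satisfying K = ⋃_{i=1}^{6} F_{α,i}(K), then the Hausdorff dimension of K (with respect to the Euclidean metric) equals max{1, log 3 / (log 2 − log(1−α))}. In particular, for α ∈ (0,1/3) the dimension is log 3/(log 2 − log(1−α)) > 1, and for α ∈ [1/3,1) the dimension is 1. -/
/-- The six fixed points `p₁, …, p₆` of the Hanoi maps: the vertices
`p₁ = (0,0)`, `p₂ = (1/2, √3/2)`, `p₃ = (1,0)` of a unit equilateral triangle,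
and the midpoints `p₄, p₅, p₆` of the sides `p₂p₃`, `p₁p₃`, `p₁p₂`. -/
noncomputable def hanoiP : Fin 6 → EuclideanSpace ℝ (Fin 2)
  | 0 => !₂[0, 0]
  | 1 => !₂[1 / 2, Real.sqrt 3 / 2]
  | 2 => !₂[1, 0]
  | 3 => !₂[3 / 4, Real.sqrt 3 / 4]
  | 4 => !₂[1 / 2, 0]
  | 5 => !₂[1 / 4, Real.sqrt 3 / 4]

/-- The linear parts `A₁, …, A₆` of the Hanoi maps of parameter `α`:
`A₁ = A₂ = A₃ = ((1−α)/2)·I`, `A₄ = (α/4)·[[1, −√3], [−√3, 3]]`,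
`A₅ = α·[[1, 0], [0, 0]]`, `A₆ = (α/4)·[[1, √3], [√3, 3]]`. -/
noncomputable def hanoiA (α : ℝ) : Fin 6 → EuclideanSpace ℝ (Fin 2) → EuclideanSpace ℝ (Fin 2)
  | 0 => fun v => !₂[(1 - α) / 2 * v 0, (1 - α) / 2 * v 1]
  | 1 => fun v => !₂[(1 - α) / 2 * v 0, (1 - α) / 2 * v 1]
  | 2 => fun v => !₂[(1 - α) / 2 * v 0, (1 - α) / 2 * v 1]
  | 3 => fun v => !₂[α / 4 * (v 0 - Real.sqrt 3 * v 1), α / 4 * (-Real.sqrt 3 * v 0 + 3 * v 1)]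
  | 4 => fun v => !₂[α * v 0, 0]
  | 5 => fun v => !₂[α / 4 * (v 0 + Real.sqrt 3 * v 1), α / 4 * (Real.sqrt 3 * v 0 + 3 * v 1)]

/-- The affine Hanoi maps `F_{α,i}(x) = A_i(x − p_i) + p_i`. -/
noncomputable def hanoiF (α : ℝ) (i : Fin 6) (x : EuclideanSpace ℝ (Fin 2)) :
    EuclideanSpace ℝ (Fin 2) :=
  hanoiA α i (x - hanoiP i) + hanoiP i

/-!
The corner maps `F₁, F₂, F₃` are homotheties of ratio `r = (1 - α) / 2` about the vertices. They
map the Reuleaux triangle over `p₁p₂p₃` into itself, with images at mutual distance at least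
`α = 1 - 2r`. Hence two points of `K` whose ternary codes first differ at place `n` are at
distance at least `α rⁿ`, while the ternary numbers of the codes differ by at most
`3⁻ⁿ = (rⁿ)ᵈ`, where `d = log 3 / (log 2 - log (1 - α))`. So the ternary number is a `d`-Hölder
function of the point, onto `[0, 1]`, which forces `d ≤ dimH K`. The segment `p₁p₃` is covered
by its images under `F₁, F₅, F₃`, so it lies in `K` and `1 ≤ dimH K`.

Conversely, unfolding `K = ⋃ Fᵢ(K)` `n` times along corner maps covers `K` by `3ⁿ` sets of
diameter `rⁿ diam K`, apart from countably many Lipschitz images of the middle pieces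
`F₄(K), F₅(K), F₆(K)`, each of which lies on a line. Hence `dimH K ≤ max d 1`.

In the code `hanoiF α i` is `F_{i+1}`; the corner maps are indexed by `Fin.castAdd 3 j` and the
middle maps by `Fin.natAdd 3 j`.
-/

open Set Filter Topology MeasureTheory
open scoped NNReal ENNReal RealInnerProductSpace

theorem dimH_range_le_of_dist_le {A X Y : Type*} [Nonempty A] [MetricSpace X] [MetricSpace Y]
    {π : A → X} {g : A → Y} {C r : ℝ≥0} (hr : 0 < r)
    (h : ∀ a b, dist (g a) (g b) ≤ C * dist (π a) (π b) ^ (r : ℝ)) :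
    dimH (range g) ≤ dimH (range π) / r := by
  have hfactor : ∀ a, g (Function.invFun π (π a)) = g a := fun a => by
    simpa [Function.invFun_eq ⟨a, rfl⟩, Real.zero_rpow (NNReal.coe_pos.2 hr).ne'] using
      h (Function.invFun π (π a)) a
  have hholder : HolderOnWith C r (g ∘ Function.invFun π) (range π) := by
    rintro _ ⟨a, rfl⟩ _ ⟨b, rfl⟩
    rw [Function.comp_apply, Function.comp_apply, hfactor, hfactor, edist_dist, edist_dist,
      ENNReal.ofReal_rpow_of_nonneg dist_nonneg r.coe_nonneg, ← ENNReal.ofReal_coe_nnreal,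
      ← ENNReal.ofReal_mul C.coe_nonneg]
    exact ENNReal.ofReal_le_ofReal (h a b)
  have hrange : (g ∘ Function.invFun π) '' range π = range g := by
    rw [← range_comp]
    exact congrArg range (funext hfactor)
  exact hrange ▸ hholder.dimH_image_le hr

section Covering

variable {X ι : Type*} [EMetricSpace X] [Fintype ι] {s : Set X} {r : ℝ≥0} (hr : r < 1)
  {D : ℝ≥0∞} (hD : D ≠ ∞) (t : (n : ℕ) → (Fin n → ι) → Set X) (hs : ∀ n, s ⊆ ⋃ v, t n v)
  (ht : ∀ n v, Metric.ediam (t n v) ≤ r ^ n * D)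
include hr hD hs ht

theorem hausdorffMeasure_eq_zero_of_forall_subset_iUnion [MeasurableSpace X] [BorelSpace X]
    {e : ℝ≥0} (he : (Fintype.card ι : ℝ≥0) * r ^ (e : ℝ) < 1) : μH[e] s = 0 := by
  set q : ℝ≥0∞ := (((Fintype.card ι : ℝ≥0) * r ^ (e : ℝ) : ℝ≥0) : ℝ≥0∞) with hq
  have hsum : ∀ n, ∑ v : Fin n → ι, Metric.ediam (t n v) ^ (e : ℝ) ≤ q ^ n * D ^ (e : ℝ) := by
    intro n
    calc ∑ v : Fin n → ι, Metric.ediam (t n v) ^ (e : ℝ)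
        ≤ ∑ _v : Fin n → ι, ((r : ℝ≥0∞) ^ n * D) ^ (e : ℝ) :=
          Finset.sum_le_sum fun v _ => by gcongr; exact ht n v
      _ = q ^ n * D ^ (e : ℝ) := by
          rw [Finset.sum_const, Finset.card_univ, Fintype.card_fun, Fintype.card_fin, nsmul_eq_mul,
            ENNReal.mul_rpow_of_nonneg _ _ e.coe_nonneg, hq, ← mul_assoc, ← ENNReal.coe_pow,
            ← ENNReal.coe_rpow_of_nonneg _ e.coe_nonneg]
          norm_cast
          rw [mul_pow, ← NNReal.rpow_natCast_mul, mul_comm (n : ℝ), NNReal.rpow_mul_natCast,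
            Nat.cast_pow]
  have hlim : Tendsto (fun n => q ^ n * D ^ (e : ℝ)) atTop (𝓝 0) := by
    rw [← zero_mul (D ^ (e : ℝ))]
    exact ENNReal.Tendsto.mul_const (ENNReal.tendsto_pow_atTop_nhds_zero_of_lt_one
      (ENNReal.coe_lt_one_iff.2 he)) (Or.inr (ENNReal.rpow_ne_top_of_nonneg e.coe_nonneg hD))
  have hrn : Tendsto (fun n => (r : ℝ≥0∞) ^ n * D) atTop (𝓝 0) := by
    simpa using ENNReal.Tendsto.mul_const (ENNReal.tendsto_pow_atTop_nhds_zero_of_lt_one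
      (by exact_mod_cast hr)) (Or.inr hD)
  refine le_antisymm ?_ zero_le
  calc μH[e] s ≤ liminf (fun n => ∑ v : Fin n → ι, Metric.ediam (t n v) ^ (e : ℝ)) atTop :=
        Measure.hausdorffMeasure_le_liminf_sum _ s _ hrn t
          (Eventually.of_forall (ht ·)) (Eventually.of_forall hs)
    _ ≤ liminf (fun n => q ^ n * D ^ (e : ℝ)) atTop := liminf_le_liminf (Eventually.of_forall hsum)
    _ = 0 := hlim.liminf_eq

theorem dimH_le_of_forall_subset_iUnion {d : ℝ≥0}
    (hd : (Fintype.card ι : ℝ≥0) * r ^ (d : ℝ) = 1) : dimH s ≤ d := by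
  borelize X
  refine dimH_le fun e he => ?_
  by_contra! hde
  have hde : d < e := ENNReal.coe_lt_coe.1 hde
  have hcard : (Fintype.card ι : ℝ≥0) ≠ 0 := by
    rintro h0
    rw [h0, zero_mul] at hd
    exact zero_ne_one hd
  have hlt : (Fintype.card ι : ℝ≥0) * r ^ (e : ℝ) < 1 := by
    rcases eq_zero_or_pos r with rfl | hr0
    · rw [NNReal.zero_rpow (by exact_mod_cast (pos_of_gt hde).ne'), mul_zero]
      exact one_pos
    · rw [← hd]
      exact mul_lt_mul_of_pos_left (NNReal.rpow_lt_rpow_of_exponent_gt hr0 hr hde)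
        (pos_iff_ne_zero.2 hcard)
  rw [hausdorffMeasure_eq_zero_of_forall_subset_iUnion hr hD t hs ht hlt] at he
  exact ENNReal.zero_ne_top he

end Covering

namespace IFS

variable {X ι : Type*}

def comp (f : ι → X → X) : {n : ℕ} → (Fin n → ι) → X → X
  | 0, _ => id
  | _ + 1, v => f (v 0) ∘ comp f (Fin.tail v)

section Words

variable {f : ι → X → X}

@[simp]
lemma comp_cons {n : ℕ} (i : ι) (v : Fin n → ι) (x : X) :
    comp f (Fin.cons i v) x = f i (comp f v x) := by
  simp [comp]

lemma comp_succ_apply (w : ℕ → ι) (n : ℕ) (x : X) :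
    comp f (fun k : Fin (n + 1) => w k) x = f (w 0) (comp f (fun k : Fin n => w (k + 1)) x) :=
  rfl

lemma mapsTo_comp {s : Set X} (h : ∀ i, MapsTo (f i) s s) :
    ∀ {n : ℕ} (v : Fin n → ι), MapsTo (comp f v) s s
  | 0, _ => mapsTo_id s
  | _ + 1, v => (h (v 0)).comp (mapsTo_comp h (Fin.tail v))

lemma lipschitzWith_comp [PseudoEMetricSpace X] {c : ℝ≥0} (hf : ∀ i, LipschitzWith c (f i)) :
    ∀ {n : ℕ} (v : Fin n → ι), LipschitzWith (c ^ n) (comp f v)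
  | 0, _ => by
    rw [pow_zero]
    exact LipschitzWith.id
  | _ + 1, v => by
    rw [pow_succ']
    exact (hf (v 0)).comp (lipschitzWith_comp hf (Fin.tail v))

lemma exists_comp_eq_of_subset_iUnion_image {E : Set X} (hE : E ⊆ ⋃ i, f i '' E) :
    ∀ (n : ℕ), ∀ x ∈ E, ∃ v : Fin n → ι, ∃ y ∈ E, comp f v y = x
  | 0, x, hx => ⟨Fin.elim0, x, hx, rfl⟩
  | n + 1, x, hx => by
    obtain ⟨i, y, hy, rfl⟩ : ∃ i, ∃ y ∈ E, f i y = x := by simpa using hE hx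
    obtain ⟨v, z, hz, rfl⟩ := exists_comp_eq_of_subset_iUnion_image hE n y hy
    exact ⟨Fin.cons i v, z, hz, comp_cons i v z⟩

lemma subset_iUnion_comp_image_union {κ : Type*} {h : κ → X → X} {K : Set X}
    (hK : K ⊆ (⋃ i, f i '' K) ∪ ⋃ k, h k '' K) (n : ℕ) :
    K ⊆ (⋃ v : Fin n → ι, comp f v '' K) ∪
      ⋃ (m : ℕ) (v : Fin m → ι) (k : κ), comp f v '' (h k '' K) := by
  induction n with
  | zero => exact fun x hx => Or.inl (mem_iUnion.2 ⟨Fin.elim0, x, hx, rfl⟩)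
  | succ n ih =>
    intro x hx
    rcases hK hx with hx | hx
    · obtain ⟨i, y, hy, rfl⟩ : ∃ i, ∃ y ∈ K, f i y = x := by simpa using hx
      rcases ih hy with hy | hy
      · obtain ⟨v, z, hz, rfl⟩ : ∃ v : Fin n → ι, ∃ z ∈ K, comp f v z = y := by simpa using hy
        exact Or.inl (mem_iUnion.2 ⟨Fin.cons i v, z, hz, comp_cons i v z⟩)
      · obtain ⟨m, v, k, z, hz, rfl⟩ :
            ∃ m, ∃ v : Fin m → ι, ∃ k, ∃ z ∈ h k '' K, comp f v z = y := by
          simpa using hy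
        exact Or.inr (mem_iUnion.2 ⟨m + 1, mem_iUnion.2 ⟨Fin.cons i v, mem_iUnion.2
          ⟨k, z, hz, comp_cons i v z⟩⟩⟩)
    · obtain ⟨k, y, hy, rfl⟩ : ∃ k, ∃ y ∈ K, h k y = x := by simpa using hx
      exact Or.inr (mem_iUnion.2 ⟨0, mem_iUnion.2 ⟨Fin.elim0, mem_iUnion.2
        ⟨k, h k y, mem_image_of_mem _ hy, rfl⟩⟩⟩)

end Words

section Contraction

variable [MetricSpace X] {f : ι → X → X} {c : ℝ≥0} (hf : ∀ i, LipschitzWith c (f i))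
  (hc : c < 1)
include hf hc

theorem subset_of_subset_iUnion_image {E K : Set X} (hEb : Bornology.IsBounded E)
    (hE : E ⊆ ⋃ i, f i '' E) (hK : IsClosed K) (hKne : K.Nonempty)
    (hfK : ∀ i, MapsTo (f i) K K) : E ⊆ K := by
  obtain ⟨k, hk⟩ := hKne
  obtain ⟨R, hR⟩ := hEb.subset_closedBall k
  intro x hx
  choose v y hy hxy using fun n => exists_comp_eq_of_subset_iUnion_image hE n x hx
  have hdist : ∀ n, dist (comp f (v n) k) x ≤ c ^ n * R := fun n => by
    rw [← hxy n]
    calc dist (comp f (v n) k) (comp f (v n) (y n)) ≤ c ^ n * dist k (y n) := by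
          simpa using (lipschitzWith_comp hf (v n)).dist_le_mul k (y n)
      _ ≤ c ^ n * R := by
          gcongr
          simpa [dist_comm] using hR (hy n)
  have hlim : Tendsto (fun n => (c : ℝ) ^ n * R) atTop (𝓝 0) := by
    simpa using (tendsto_pow_atTop_nhds_zero_of_lt_one c.coe_nonneg hc).mul_const R
  exact hK.mem_of_tendsto (tendsto_iff_dist_tendsto_zero.2 (squeeze_zero (fun _ => dist_nonneg)
    hdist hlim)) (Eventually.of_forall fun n => mapsTo_comp hfK (v n) hk)

theorem dimH_le_max_iSup_dimH [Fintype ι] {κ : Type*} [Countable κ] {h : κ → X → X} {d : ℝ≥0}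
    (hd : (Fintype.card ι : ℝ≥0) * c ^ (d : ℝ) = 1) {K : Set X} (hKb : Bornology.IsBounded K)
    (hK : K ⊆ (⋃ i, f i '' K) ∪ ⋃ k, h k '' K) :
    dimH K ≤ max (d : ℝ≥0∞) (⨆ k, dimH (h k '' K)) := by
  set B := ⋃ (m : ℕ) (v : Fin m → ι) (k : κ), comp f v '' (h k '' K)
  have hB : dimH B ≤ ⨆ k, dimH (h k '' K) := by
    simp only [B, dimH_iUnion]
    exact iSup_le fun m => iSup_le fun v => iSup_le fun k =>
      ((lipschitzWith_comp hf v).dimH_image_le _).trans (le_iSup (fun k => dimH (h k '' K)) k)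
  have hKB : dimH (K \ B) ≤ d :=
    dimH_le_of_forall_subset_iUnion hc hKb.ediam_ne_top (fun _ v => comp f v '' K)
      (fun n _ hx => (subset_iUnion_comp_image_union hK n hx.1).resolve_right hx.2)
      (fun _ v => by simpa using (lipschitzWith_comp hf v).ediam_image_le K) hd
  calc dimH K ≤ dimH ((K \ B) ∪ B) := dimH_mono (by simp)
    _ = max (dimH (K \ B)) (dimH B) := dimH_union _ _
    _ ≤ _ := max_le_max hKB hB

end Contraction

noncomputable def coding [TopologicalSpace X] (f : ι → X → X) (x₀ : X) (w : ℕ → ι) : X :=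
  haveI : Nonempty X := ⟨x₀⟩
  limUnder atTop fun n => comp f (fun k : Fin n => w k) x₀

section Coding

variable [MetricSpace X] [Finite ι] {f : ι → X → X} {c : ℝ≥0}
  (hf : ∀ i, LipschitzWith c (f i)) (hc : c < 1)
include hf hc

lemma cauchySeq_comp (x₀ : X) (w : ℕ → ι) :
    CauchySeq fun n => comp f (fun k : Fin n => w k) x₀ := by
  obtain ⟨C, hC⟩ := (finite_range fun i => dist x₀ (f i x₀)).bddAbove
  have step : ∀ n (w : ℕ → ι), dist (comp f (fun k : Fin n => w k) x₀)
      (comp f (fun k : Fin (n + 1) => w k) x₀) ≤ C * c ^ n := by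
    intro n
    induction n with
    | zero => exact fun w => by simpa [comp] using hC ⟨w 0, rfl⟩
    | succ n ih =>
      intro w
      rw [comp_succ_apply w n, comp_succ_apply w (n + 1)]
      calc _ ≤ c * dist (comp f (fun k : Fin n => w (k + 1)) x₀)
            (comp f (fun k : Fin (n + 1) => w (k + 1)) x₀) := (hf (w 0)).dist_le_mul _ _
        _ ≤ c * (C * c ^ n) := by gcongr; exact ih fun k => w (k + 1)
        _ = C * c ^ (n + 1) := by ring
  exact cauchySeq_of_le_geometric c C hc fun n => step n w

variable [CompleteSpace X]

lemma tendsto_comp_coding (x₀ y : X) (w : ℕ → ι) :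
    Tendsto (fun n => comp f (fun k : Fin n => w k) y) atTop (𝓝 (coding f x₀ w)) := by
  have : Nonempty X := ⟨x₀⟩
  refine (cauchySeq_comp hf hc x₀ w).tendsto_limUnder.congr_dist
    (squeeze_zero (fun _ => dist_nonneg) (fun n => (lipschitzWith_comp hf _).dist_le_mul x₀ y) ?_)
  simpa using (tendsto_pow_atTop_nhds_zero_of_lt_one c.coe_nonneg hc).mul_const (dist x₀ y)

lemma coding_mem {T : Set X} (hT : IsClosed T) (hfT : ∀ i, MapsTo (f i) T T) {y : X}
    (hy : y ∈ T) (x₀ : X) (w : ℕ → ι) : coding f x₀ w ∈ T :=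
  hT.mem_of_tendsto (tendsto_comp_coding hf hc x₀ y w)
    (Eventually.of_forall fun _ => mapsTo_comp hfT _ hy)

lemma coding_eq (x₀ : X) (w : ℕ → ι) :
    coding f x₀ w = f (w 0) (coding f x₀ fun k => w (k + 1)) :=
  tendsto_nhds_unique ((tendsto_comp_coding hf hc x₀ x₀ w).comp (tendsto_add_atTop_nat 1))
    (((hf (w 0)).continuous.tendsto _).comp (tendsto_comp_coding hf hc x₀ x₀ _))

end Coding

section Separated

variable [MetricSpace X] [CompleteSpace X] [Finite ι] {f : ι → X → X} {r : ℝ≥0}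
  (hsim : ∀ i x y, dist (f i x) (f i y) = r * dist x y) (hr : r < 1)
  {T : Set X} (hT : IsClosed T) (hfT : ∀ i, MapsTo (f i) T T) {t : X} (ht : t ∈ T)
  {δ : ℝ} (hsep : ∀ i j, i ≠ j → ∀ x ∈ T, ∀ y ∈ T, δ ≤ dist (f i x) (f j y))
include hsim hr hT hfT ht hsep

lemma le_dist_coding (x₀ : X) :
    ∀ (n : ℕ) (w w' : ℕ → ι), (∀ k < n, w k = w' k) → w n ≠ w' n →
      δ * r ^ n ≤ dist (coding f x₀ w) (coding f x₀ w') := by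
  have hf : ∀ i, LipschitzWith r (f i) := fun i =>
    LipschitzWith.of_dist_le_mul fun x y => (hsim i x y).le
  have hmem := fun w => coding_mem hf hr hT hfT ht x₀ w
  intro n
  induction n with
  | zero =>
    intro w w' _ hne
    rw [coding_eq hf hr x₀ w, coding_eq hf hr x₀ w', pow_zero, mul_one]
    exact hsep _ _ hne _ (hmem _) _ (hmem _)
  | succ n ih =>
    intro w w' heq hne
    rw [coding_eq hf hr x₀ w, coding_eq hf hr x₀ w', heq 0 n.succ_pos, hsim, pow_succ',
      mul_left_comm]
    gcongr
    exact ih (fun k => w (k + 1)) (fun k => w' (k + 1)) (fun k hk => heq (k + 1) (by omega)) hne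

end Separated

section Digits

variable [MetricSpace X] [CompleteSpace X] {b : ℕ} {f : Fin b → X → X} {r : ℝ≥0}
  (hsim : ∀ i x y, dist (f i x) (f i y) = r * dist x y) (hr : r < 1)
  {T : Set X} (hT : IsClosed T) (hfT : ∀ i, MapsTo (f i) T T) {t : X} (ht : t ∈ T)
  {δ : ℝ} (hδ : 0 < δ) (hsep : ∀ i j, i ≠ j → ∀ x ∈ T, ∀ y ∈ T, δ ≤ dist (f i x) (f j y))
  {d : ℝ≥0} (hd : (b : ℝ≥0) * r ^ (d : ℝ) = 1)
include hsim hr hT hfT ht hδ hsep hd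

lemma dist_ofDigits_le (x₀ : X) (w w' : ℕ → Fin b) :
    dist (Real.ofDigits w) (Real.ofDigits w') ≤
      (δ⁻¹ ^ (d : ℝ)).toNNReal * dist (coding f x₀ w) (coding f x₀ w') ^ (d : ℝ) := by
  rw [Real.coe_toNNReal _ (by positivity)]
  by_cases hw : w = w'
  · rw [hw, dist_self]
    positivity
  classical
  have hex : ∃ n, w n ≠ w' n := Function.ne_iff.1 hw
  have hagree : ∀ k < Nat.find hex, w k = w' k := fun k hk => not_not.1 (Nat.find_min hex hk)
  have hfar := le_dist_coding hsim hr hT hfT ht hsep x₀ _ w w' hagree (Nat.find_spec hex)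
  have hrd : (r : ℝ) ^ (d : ℝ) = (b : ℝ)⁻¹ := eq_inv_of_mul_eq_one_right (mod_cast hd)
  calc dist (Real.ofDigits w) (Real.ofDigits w') ≤ ((b : ℝ) ^ Nat.find hex)⁻¹ :=
        Real.abs_ofDigits_sub_ofDigits_le hagree
    _ = ((r : ℝ) ^ Nat.find hex) ^ (d : ℝ) := by
        rw [← Real.rpow_pow_comm r.coe_nonneg, hrd, inv_pow]
    _ ≤ (δ⁻¹ * dist (coding f x₀ w) (coding f x₀ w')) ^ (d : ℝ) := by
        gcongr
        rwa [le_inv_mul_iff₀ hδ]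
    _ = _ := Real.mul_rpow (by positivity) dist_nonneg

theorem le_dimH_range_coding (hb : 1 < b) (x₀ : X) :
    (d : ℝ≥0∞) ≤ dimH (range (coding f x₀)) := by
  have : NeZero b := ⟨by omega⟩
  have hd0 : 0 < d := by
    refine pos_iff_ne_zero.2 fun h0 => hb.ne' ?_
    rw [h0, NNReal.coe_zero, NNReal.rpow_zero, mul_one] at hd
    exact_mod_cast hd
  have hunit : (1 : ℝ≥0∞) ≤ dimH (range (Real.ofDigits (b := b))) :=
    calc (1 : ℝ≥0∞) = dimH (Icc (0 : ℝ) 1) := by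
          rw [← segment_eq_Icc zero_le_one, Real.dimH_segment zero_ne_one]
      _ ≤ _ := dimH_mono fun x hx => by
          obtain ⟨w, -, hw⟩ := Real.ofDigits_SurjOn hb hx
          exact ⟨w, hw⟩
  have := hunit.trans
    (dimH_range_le_of_dist_le hd0 (dist_ofDigits_le hsim hr hT hfT ht hδ hsep hd x₀))
  rwa [ENNReal.le_div_iff_mul_le (Or.inl (mod_cast hd0.ne')) (Or.inl ENNReal.coe_ne_top),
    one_mul] at this

end Digits

end IFS

namespace Hanoi

local notation "ℝ²" => EuclideanSpace ℝ (Fin 2)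

/-- Unit directions of the sides `p₂p₃`, `p₁p₃`, `p₁p₂`: `A₄, A₅, A₆` are `α` times the orthogonal
projections onto them. -/
noncomputable def sideDir : Fin 3 → ℝ²
  | 0 => !₂[1 / 2, -(√3 / 2)]
  | 1 => !₂[1, 0]
  | 2 => !₂[1 / 2, √3 / 2]

noncomputable def cornerRatio (α : ℝ) : ℝ≥0 := ((1 - α) / 2).toNNReal

noncomputable def cornerDim (α : ℝ) : ℝ≥0 :=
  (Real.log 3 / (Real.log 2 - Real.log (1 - α))).toNNReal

def reuleauxTriangle : Set ℝ² := ⋂ j : Fin 3, Metric.closedBall (hanoiP (Fin.castAdd 3 j)) 1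

lemma hanoiA_castAdd (α : ℝ) (j : Fin 3) (v : ℝ²) :
    hanoiA α (Fin.castAdd 3 j) v = ((1 - α) / 2) • v := by
  fin_cases j <;> ext k <;> fin_cases k <;> simp [hanoiA]

lemma hanoiA_natAdd (α : ℝ) (j : Fin 3) (v : ℝ²) :
    hanoiA α (Fin.natAdd 3 j) v = (α * ⟪v, sideDir j⟫) • sideDir j := by
  have h3 : √3 ^ 2 = 3 := Real.sq_sqrt (by norm_num)
  fin_cases j <;> ext k <;> fin_cases k <;> simp [hanoiA, sideDir, Fin.sum_univ_two, inner] <;>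
    first | ring1 | (ring_nf; rw [h3]; ring1)

lemma norm_sideDir (j : Fin 3) : ‖sideDir j‖ = 1 := by
  have h3 : √3 ^ 2 = 3 := Real.sq_sqrt (by norm_num)
  fin_cases j <;> simp [sideDir, EuclideanSpace.norm_eq, Fin.sum_univ_two, div_pow, h3] <;>
    norm_num

lemma dist_hanoiP_castAdd {i j : Fin 3} (hij : i ≠ j) :
    dist (hanoiP (Fin.castAdd 3 i)) (hanoiP (Fin.castAdd 3 j)) = 1 := by
  have h3 : √3 ^ 2 = 3 := Real.sq_sqrt (by norm_num)
  fin_cases i <;> fin_cases j <;>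
    simp_all [hanoiP, EuclideanSpace.dist_eq, Fin.sum_univ_two, Real.dist_eq, div_pow] <;> norm_num

variable {α : ℝ}

lemma coe_cornerRatio (hα : α ≤ 1) : (cornerRatio α : ℝ) = (1 - α) / 2 :=
  Real.coe_toNNReal _ (by linarith)

lemma cornerRatio_lt_one (hα : α ∈ Ioo 0 1) : cornerRatio α < 1 :=
  Real.toNNReal_lt_one.2 (by linarith [hα.1])

lemma three_mul_cornerRatio_rpow_cornerDim (hα : α ∈ Ioo 0 1) :
    (3 : ℝ≥0) * cornerRatio α ^ (cornerDim α : ℝ) = 1 := by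
  have hr : 0 < (1 - α) / 2 := by linarith [hα.2]
  have hden : 0 < Real.log 2 - Real.log (1 - α) := by
    linarith [Real.log_neg (by linarith [hα.2] : 0 < 1 - α) (by linarith [hα.1]),
      Real.log_pos one_lt_two]
  have hlog : Real.log ((1 - α) / 2) = -(Real.log 2 - Real.log (1 - α)) := by
    rw [Real.log_div (by linarith) two_ne_zero]
    ring
  apply NNReal.coe_injective
  rw [NNReal.coe_mul, NNReal.coe_rpow, coe_cornerRatio hα.2.le, cornerDim,
    Real.coe_toNNReal _ (div_pos (Real.log_pos (by norm_num)) hden).le, Real.rpow_def_of_pos hr,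
    hlog, neg_mul, mul_div_cancel₀ _ hden.ne', Real.exp_neg, Real.exp_log (by norm_num)]
  norm_num

lemma hanoiF_castAdd (j : Fin 3) (x : ℝ²) :
    hanoiF α (Fin.castAdd 3 j) x =
      hanoiP (Fin.castAdd 3 j) + ((1 - α) / 2) • (x - hanoiP (Fin.castAdd 3 j)) := by
  rw [hanoiF, hanoiA_castAdd, add_comm]

lemma dist_hanoiF_castAdd (hα : α ≤ 1) (j : Fin 3) (x y : ℝ²) :
    dist (hanoiF α (Fin.castAdd 3 j) x) (hanoiF α (Fin.castAdd 3 j) y) =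
      cornerRatio α * dist x y := by
  rw [hanoiF, hanoiF, dist_add_right, hanoiA_castAdd, hanoiA_castAdd, dist_smul₀, dist_sub_right,
    Real.norm_of_nonneg (by linarith), coe_cornerRatio hα]

lemma lipschitzWith_hanoiF_castAdd (hα : α ≤ 1) (j : Fin 3) :
    LipschitzWith (cornerRatio α) (hanoiF α (Fin.castAdd 3 j)) :=
  LipschitzWith.of_dist_le_mul fun x y => (dist_hanoiF_castAdd hα j x y).le

lemma dist_hanoiF_natAdd_le (hα : 0 ≤ α) (j : Fin 3) (x y : ℝ²) :
    dist (hanoiF α (Fin.natAdd 3 j) x) (hanoiF α (Fin.natAdd 3 j) y) ≤ α * dist x y := by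
  rw [hanoiF, hanoiF, dist_add_right, hanoiA_natAdd, hanoiA_natAdd, dist_eq_norm, ← sub_smul,
    ← mul_sub, ← inner_sub_left, sub_sub_sub_cancel_right, norm_smul, norm_sideDir, mul_one,
    Real.norm_eq_abs, abs_mul, abs_of_nonneg hα, dist_eq_norm]
  gcongr
  simpa [norm_sideDir] using abs_real_inner_le_norm (x - y) (sideDir j)

lemma lipschitzWith_hanoiF (hα : α ∈ Ioo 0 1) (i : Fin 6) :
    LipschitzWith (max ((1 - α) / 2) α).toNNReal (hanoiF α i) := by
  refine LipschitzWith.of_dist_le_mul fun x y => ?_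
  rw [Real.coe_toNNReal _ (le_max_of_le_right hα.1.le)]
  refine Fin.addCases (m := 3) (n := 3) (fun j => ?_) (fun j => ?_) i
  · rw [dist_hanoiF_castAdd hα.2.le, coe_cornerRatio hα.2.le]
    gcongr
    exact le_max_left _ _
  · refine (dist_hanoiF_natAdd_le hα.1.le j x y).trans ?_
    gcongr
    exact le_max_right _ _

lemma dimH_image_hanoiF_natAdd_le (j : Fin 3) (s : Set ℝ²) :
    dimH (hanoiF α (Fin.natAdd 3 j) '' s) ≤ 1 :=
  calc dimH (hanoiF α (Fin.natAdd 3 j) '' s)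
      ≤ dimH (range fun t : ℝ => t • sideDir j + hanoiP (Fin.natAdd 3 j)) := by
        refine dimH_mono ?_
        rintro _ ⟨x, -, rfl⟩
        exact ⟨_, by rw [hanoiF, hanoiA_natAdd]⟩
    _ ≤ 1 := (ContDiff.dimH_range_le (by fun_prop)).trans_eq (by simp)

lemma isClosed_reuleauxTriangle : IsClosed reuleauxTriangle :=
  isClosed_iInter fun _ => Metric.isClosed_closedBall

lemma hanoiP_castAdd_mem_reuleauxTriangle (i : Fin 3) :
    hanoiP (Fin.castAdd 3 i) ∈ reuleauxTriangle := by
  refine mem_iInter.2 fun j => ?_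
  rcases eq_or_ne i j with rfl | hij
  · exact Metric.mem_closedBall_self zero_le_one
  · exact (dist_hanoiP_castAdd hij).le

lemma mapsTo_hanoiF_castAdd_reuleauxTriangle (hα : α ∈ Ioo 0 1) (i : Fin 3) :
    MapsTo (hanoiF α (Fin.castAdd 3 i)) reuleauxTriangle reuleauxTriangle := by
  intro x hx
  rw [hanoiF_castAdd]
  exact mem_iInter.2 fun j => (convex_closedBall _ _).add_smul_sub_mem
    (mem_iInter.1 (hanoiP_castAdd_mem_reuleauxTriangle i) j) (mem_iInter.1 hx j)
    ⟨by linarith [hα.2], by linarith [hα.1]⟩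

lemma le_dist_hanoiF_castAdd (hα : α ≤ 1) {i j : Fin 3} (hij : i ≠ j) {x y : ℝ²}
    (hx : x ∈ reuleauxTriangle) (hy : y ∈ reuleauxTriangle) :
    α ≤ dist (hanoiF α (Fin.castAdd 3 i) x) (hanoiF α (Fin.castAdd 3 j) y) := by
  have near : ∀ k, ∀ z ∈ reuleauxTriangle,
      dist (hanoiP (Fin.castAdd 3 k)) (hanoiF α (Fin.castAdd 3 k) z) ≤ (1 - α) / 2 := by
    intro k z hz
    rw [hanoiF_castAdd, dist_comm, dist_self_add_left, norm_smul,
      Real.norm_of_nonneg (by linarith), ← dist_eq_norm]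
    exact mul_le_of_le_one_right (by linarith) (mem_iInter.1 hz k)
  have := dist_triangle4 (hanoiP (Fin.castAdd 3 i)) (hanoiF α (Fin.castAdd 3 i) x)
    (hanoiF α (Fin.castAdd 3 j) y) (hanoiP (Fin.castAdd 3 j))
  rw [dist_hanoiP_castAdd hij, dist_comm (hanoiF α _ y)] at this
  linarith [near i x hx, near j y hy]

lemma segment_subset_iUnion_image (hα : α ∈ Ioo 0 1) :
    segment ℝ (hanoiP 0) (hanoiP 2) ⊆ ⋃ i, hanoiF α i '' segment ℝ (hanoiP 0) (hanoiP 2) := by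
  have hline : ∀ s, AffineMap.lineMap (hanoiP 0) (hanoiP 2) s = !₂[s, 0] := fun s => by
    ext k; fin_cases k <;> simp [hanoiP, AffineMap.lineMap_apply]
  rw [segment_eq_image_lineMap]
  simp only [hline]
  rintro _ ⟨t, ⟨ht0, ht1⟩, rfl⟩
  have piece : ∀ (i : Fin 6) (a b : ℝ), (∀ s, hanoiF α i !₂[s, 0] = !₂[a * s + b, 0]) →
      0 < a → b ≤ t → t ≤ a + b →
      !₂[t, 0] ∈ ⋃ i, hanoiF α i '' ((fun s : ℝ => !₂[s, 0]) '' Icc 0 1) := by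
    intro i a b hi ha hbt hta
    refine mem_iUnion.2 ⟨i, _, ⟨(t - b) / a, ⟨div_nonneg (by linarith) ha.le, ?_⟩, rfl⟩, ?_⟩
    · rw [div_le_one ha]
      linarith
    · rw [hi, mul_div_cancel₀ _ ha.ne', sub_add_cancel]
  have h0 : ∀ s, hanoiF α 0 !₂[s, 0] = !₂[(1 - α) / 2 * s + 0, 0] := fun s => by
    ext k; fin_cases k <;> simp [hanoiF, hanoiA, hanoiP]
  have h2 : ∀ s, hanoiF α 2 !₂[s, 0] = !₂[(1 - α) / 2 * s + (1 + α) / 2, 0] := fun s => by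
    ext k; fin_cases k <;> simp [hanoiF, hanoiA, hanoiP]; ring
  have h4 : ∀ s, hanoiF α 4 !₂[s, 0] = !₂[α * s + (1 - α) / 2, 0] := fun s => by
    ext k; fin_cases k <;> simp [hanoiF, hanoiA, hanoiP]; ring
  obtain ⟨hα0, hα1⟩ := hα
  rcases le_or_gt t ((1 - α) / 2) with h | h
  · exact piece 0 _ _ h0 (by linarith) (by linarith) (by linarith)
  rcases le_or_gt t ((1 + α) / 2) with h' | h'
  · exact piece 4 _ _ h4 hα0 h.le (by linarith)
  · exact piece 2 _ _ h2 (by linarith) h'.le (by linarith)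

variable {K : Set ℝ²}

lemma mapsTo_hanoiF (hK : K = ⋃ i, hanoiF α i '' K) (i : Fin 6) : MapsTo (hanoiF α i) K K := by
  intro x hx
  rw [hK]
  exact mem_iUnion_of_mem i (mem_image_of_mem _ hx)

lemma one_le_dimH (hα : α ∈ Ioo 0 1) (hKne : K.Nonempty) (hKc : IsCompact K)
    (hK : K = ⋃ i, hanoiF α i '' K) : 1 ≤ dimH K := by
  have hseg : segment ℝ (hanoiP 0) (hanoiP 2) ⊆ K :=
    IFS.subset_of_subset_iUnion_image (lipschitzWith_hanoiF hα)
      (Real.toNNReal_lt_one.2 (max_lt (by linarith [hα.1]) hα.2))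
      (by rw [segment_eq_image_lineMap]; exact (isCompact_Icc.image (by fun_prop)).isBounded)
      (segment_subset_iUnion_image hα) hKc.isClosed hKne (mapsTo_hanoiF hK)
  have hne : hanoiP 0 ≠ hanoiP 2 := fun h => by simpa [hanoiP] using congrArg (· 0) h
  exact (Real.dimH_segment hne).symm.le.trans (dimH_mono hseg)

lemma cornerDim_le_dimH (hα : α ∈ Ioo 0 1) (hKne : K.Nonempty) (hKc : IsCompact K)
    (hK : K = ⋃ i, hanoiF α i '' K) : (cornerDim α : ℝ≥0∞) ≤ dimH K := by
  obtain ⟨x₀, hx₀⟩ := hKne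
  refine (IFS.le_dimH_range_coding (dist_hanoiF_castAdd hα.2.le) (cornerRatio_lt_one hα)
    isClosed_reuleauxTriangle (mapsTo_hanoiF_castAdd_reuleauxTriangle hα)
    (hanoiP_castAdd_mem_reuleauxTriangle 0) hα.1
    (fun _ _ hij _ hx _ hy => le_dist_hanoiF_castAdd hα.2.le hij hx hy)
    (by simpa using three_mul_cornerRatio_rpow_cornerDim hα) (by norm_num) x₀).trans
    (dimH_mono ?_)
  rintro _ ⟨w, rfl⟩
  exact IFS.coding_mem (lipschitzWith_hanoiF_castAdd hα.2.le) (cornerRatio_lt_one hα)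
    hKc.isClosed (fun _ => mapsTo_hanoiF hK _) hx₀ x₀ w

lemma dimH_le_max (hα : α ∈ Ioo 0 1) (hKc : IsCompact K) (hK : K = ⋃ i, hanoiF α i '' K) :
    dimH K ≤ max (cornerDim α : ℝ≥0∞) 1 := by
  have hcover : K ⊆ (⋃ j : Fin 3, hanoiF α (Fin.castAdd 3 j) '' K) ∪
      ⋃ j : Fin 3, hanoiF α (Fin.natAdd 3 j) '' K := by
    intro x hx
    rw [hK] at hx
    obtain ⟨i, hi⟩ := mem_iUnion.1 hx
    exact Fin.addCases (m := 3) (n := 3) (fun j hj => Or.inl (mem_iUnion_of_mem j hj))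
      (fun j hj => Or.inr (mem_iUnion_of_mem j hj)) i hi
  refine (IFS.dimH_le_max_iSup_dimH (lipschitzWith_hanoiF_castAdd hα.2.le)
    (cornerRatio_lt_one hα) (by simpa using three_mul_cornerRatio_rpow_cornerDim hα)
    hKc.isBounded hcover).trans (max_le_max le_rfl ?_)
  exact iSup_le fun j => dimH_image_hanoiF_natAdd_le j K

end Hanoi

/-- For `α ∈ (0,1)`, any nonempty compact set `K` with `K = ⋃_{i=1}^{6} F_{α,i}(K)`
has Hausdorff dimension `max{1, log 3 / (log 2 − log(1−α))}`. -/
theorem hanoi_attractor_dimH (α : ℝ) (hα : α ∈ Set.Ioo (0 : ℝ) 1)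
    (K : Set (EuclideanSpace ℝ (Fin 2))) (hKne : K.Nonempty) (hKc : IsCompact K)
    (hK : K = ⋃ i : Fin 6, hanoiF α i '' K) :
    dimH K = ENNReal.ofReal (max 1 (Real.log 3 / (Real.log 2 - Real.log (1 - α)))) := by
  rw [ENNReal.ofReal_max, ENNReal.ofReal_one, max_comm]
  exact le_antisymm (Hanoi.dimH_le_max hα hKc hK)
    (max_le (Hanoi.cornerDim_le_dimH hα hKne hKc hK) (Hanoi.one_le_dimH hα hKne hKc hK))
end

section
/- Let a < b be real numbers, let u : ℝ → ℝ be differentiable on [a,b] with derivative u′ such that u′ and (u′)² are interval-integrable on [a,b], and let a = t₀ < t₁ < ⋯ < t_m = b be a partition. Then ∫_a^b (u′(t))² dt ≥ Σ_{i=1}^{m} (u(t_i) − u(t_{i−1}))² / (t_i − t_{i−1}). In particular, among functions with prescribed values at the partition points, the piecewise linear interpolant minimizes the Dirichlet energy ∫ (u′)². -/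
/-!
On each cell `[tᵢ, tᵢ₊₁]` of the partition, `u(tᵢ₊₁) - u(tᵢ) = ∫ u'` by the fundamental theorem
of calculus, and Cauchy–Schwarz gives `(∫ u')² ≤ (tᵢ₊₁ - tᵢ) ∫ u'²`. Summing over the cells and
using additivity of the integral over adjacent intervals yields the estimate.
-/

open MeasureTheory Set

theorem sq_integral_div_le_integral_sq {c d : ℝ} (hcd : c ≤ d) {f : ℝ → ℝ}
    (hf : IntervalIntegrable f volume c d)
    (hf2 : IntervalIntegrable (fun s => f s ^ 2) volume c d) :
    (∫ s in c..d, f s) ^ 2 / (d - c) ≤ ∫ s in c..d, f s ^ 2 := by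
  set I := ∫ s in c..d, f s
  -- `k` is the mean value of `f`, the minimizer of `∫ (f - k)²`.
  set k := I / (d - c)
  have hnonneg : 0 ≤ ∫ s in c..d, (f s - k) ^ 2 :=
    intervalIntegral.integral_nonneg hcd fun _ _ => sq_nonneg _
  have hexpand : ∫ s in c..d, (f s - k) ^ 2
      = (∫ s in c..d, f s ^ 2) - 2 * k * I + k ^ 2 * (d - c) := by
    have hsq : ∀ s, (f s - k) ^ 2 = (f s ^ 2 - (2 * k) * f s) + k ^ 2 := fun s => by ring
    simp_rw [hsq]
    rw [intervalIntegral.integral_add (hf2.sub (hf.const_mul _)) intervalIntegrable_const,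
      intervalIntegral.integral_sub hf2 (hf.const_mul _), intervalIntegral.integral_const_mul,
      intervalIntegral.integral_const, smul_eq_mul]
    ring
  have hk : k ^ 2 * (d - c) = I ^ 2 / (d - c) := by
    rcases hcd.eq_or_lt with rfl | hlt
    · simp
    · simp only [k]
      field_simp
  have hkI : k * I = I ^ 2 / (d - c) := by ring
  linarith

theorem sq_sub_div_le_integral_deriv_sq {c d : ℝ} (hcd : c ≤ d) {u u' : ℝ → ℝ}
    (hderiv : ∀ x ∈ Icc c d, HasDerivAt u (u' x) x)
    (hu' : IntervalIntegrable u' volume c d)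
    (hu'2 : IntervalIntegrable (fun s => u' s ^ 2) volume c d) :
    (u d - u c) ^ 2 / (d - c) ≤ ∫ s in c..d, u' s ^ 2 := by
  have hftc : ∫ s in c..d, u' s = u d - u c :=
    intervalIntegral.integral_eq_sub_of_hasDerivAt
      (fun x hx => hderiv x (uIcc_of_le hcd ▸ hx)) hu'
  simpa only [hftc] using sq_integral_div_le_integral_sq hcd hu' hu'2

theorem partition_energy_estimate_general (a b : ℝ) (u u' : ℝ → ℝ)
    (hderiv : ∀ t ∈ Set.Icc a b, HasDerivAt u (u' t) t)
    (hint : IntervalIntegrable u' MeasureTheory.volume a b)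
    (hint2 : IntervalIntegrable (fun t => (u' t) ^ 2) MeasureTheory.volume a b)
    (m : ℕ) (t : ℕ → ℝ) (ht0 : t 0 = a) (htm : t m = b)
    (hmono : ∀ i < m, t i < t (i + 1)) :
    ∑ i ∈ Finset.range m, (u (t (i + 1)) - u (t i)) ^ 2 / (t (i + 1) - t i) ≤
      ∫ s in a..b, (u' s) ^ 2 := by
  have ht : MonotoneOn t (Iic m) :=
    monotoneOn_of_le_add_one ordConnected_Iic fun i _ _ hi => (hmono i hi).le
  have hIcc : ∀ i < m, Icc (t i) (t (i + 1)) ⊆ Icc a b := fun i hi =>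
    Icc_subset_Icc (ht0 ▸ ht (Nat.zero_le m) hi.le (Nat.zero_le i)) (htm ▸ ht hi (le_refl m) hi)
  have huIcc : ∀ i < m, uIcc (t i) (t (i + 1)) ⊆ uIcc a b := fun i hi => by
    rw [uIcc_of_le (hmono i hi).le]
    exact (hIcc i hi).trans Icc_subset_uIcc
  calc ∑ i ∈ Finset.range m, (u (t (i + 1)) - u (t i)) ^ 2 / (t (i + 1) - t i)
      ≤ ∑ i ∈ Finset.range m, ∫ s in t i..t (i + 1), u' s ^ 2 := by
        refine Finset.sum_le_sum fun i hi => ?_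
        have hi : i < m := Finset.mem_range.mp hi
        exact sq_sub_div_le_integral_deriv_sq (hmono i hi).le
          (fun x hx => hderiv x (hIcc i hi hx)) (hint.mono_set (huIcc i hi))
          (hint2.mono_set (huIcc i hi))
    _ = ∫ s in a..b, u' s ^ 2 := by
        rw [intervalIntegral.sum_integral_adjacent_intervals
          fun i hi => hint2.mono_set (huIcc i hi), ht0, htm]

/-- Partition energy estimate: if `u` is differentiable on `[a,b]` with derivative `u′`
(`u′` and `(u′)²` interval-integrable), and `a = t₀ < t₁ < ⋯ < t_m = b` is a partition,
then `∫_a^b (u′)² ≥ Σ_{i=1}^{m} (u(tᵢ) − u(t_{i−1}))²/(tᵢ − t_{i−1})`, i.e. the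
piecewise linear interpolant minimizes the Dirichlet energy. -/
theorem partition_energy_estimate (a b : ℝ) (hab : a < b) (u u' : ℝ → ℝ)
    (hderiv : ∀ t ∈ Set.Icc a b, HasDerivAt u (u' t) t)
    (hint : IntervalIntegrable u' MeasureTheory.volume a b)
    (hint2 : IntervalIntegrable (fun t => (u' t) ^ 2) MeasureTheory.volume a b)
    (m : ℕ) (hm : 1 ≤ m) (t : ℕ → ℝ) (ht0 : t 0 = a) (htm : t m = b)
    (hmono : ∀ i < m, t i < t (i + 1)) :
    ∑ i ∈ Finset.range m, (u (t (i + 1)) - u (t i)) ^ 2 / (t (i + 1) - t i) ≤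
      ∫ s in a..b, (u' s) ^ 2 :=
  partition_energy_estimate_general a b u u' hderiv hint hint2 m t ht0 htm hmono
end
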